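/- arXiv:1408.0695 — 6 statements merged into one kernel-verified Lean document; each statement's English description precedes it below -/
import Mathlib

section
/- Consider one patch of the SEIR model with a continuous nonnegative force of infection F : [0,∞) → ℝ: differentiable functions S, E, I, R on [0,∞) satisfy S'(t) = -S(t)F(t) - μS(t) + (1-δ)μN₀, E'(t) = S(t)F(t) - (μ+φ)E(t), I'(t) = φE(t) - (μ+γ)I(t), R'(t) = γI(t) - μR(t) + δμN₀, where μ, φ, γ > 0, δ ∈ (0,1), and N₀ = S(0)+E(0)+I(0)+R(0). If S(0), E(0), I(0), R(0) > 0, then for all t ≥ 0 each of S(t), E(t), I(t), R(t) lies in the interval (0, N₀]. -/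
/-!
Each class `X` obeys `X' ≥ -c X` on `[0, T]` as long as the classes feeding it are positive,
with `c = sup F + μ` for `S` (finite since `F` is continuous on the compact `[0, T]`), `μ + φ`
for `E`, `μ + γ` for `I` and `μ` for `R`. Comparing with `X 0 · e^{-(c+1)t}` shows that `X` stays
positive, in the order `S, E, I, R`. The total population `N` obeys `N' = μ (N₀ - N)`, so it is
constantly `N₀`, and each of the four positive classes is at most `N₀`.
-/

open Set

section LinearComparison

variable {X X' : ℝ → ℝ} {a b : ℝ}

theorem pos_of_neg_mul_le_deriv {c : ℝ}
    (hX : ∀ t ∈ Ici a, HasDerivWithinAt X (X' t) (Ici a) t) (ha : 0 < X a)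
    (hX' : ∀ t ∈ Ico a b, 0 < X t → -c * X t ≤ X' t) :
    ∀ t ∈ Icc a b, 0 < X t := by
  set B : ℝ → ℝ := fun t => X a * Real.exp (-(c + 1) * (t - a))
  have hB : ∀ t, HasDerivAt B (-(c + 1) * B t) t := fun t => by
    have := ((((hasDerivAt_id t).sub_const a).const_mul (-(c + 1))).exp).const_mul (X a)
    simp only [id, mul_one] at this
    exact this.congr_deriv (by ring)
  -- `X` can only meet `B` with `X' ≥ -c X > -(c + 1) X = B'`, so it never drops below `B`.
  have hBX : ∀ t ∈ Icc a b, -X t ≤ -B t :=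
    image_le_of_deriv_right_lt_deriv_boundary' (f := fun t => -X t) (f' := fun t => -X' t)
      (B := fun t => -B t) (B' := fun t => -(-(c + 1) * B t))
      (fun t ht => ((hX t ht.1).continuousWithinAt.mono Icc_subset_Ici_self).neg)
      (fun t ht => ((hX t ht.1).mono (Ici_subset_Ici.2 ht.1)).neg)
      (by simp [B])
      (fun t _ => (hB t).continuousAt.continuousWithinAt.neg)
      (fun t _ => (hB t).hasDerivWithinAt.neg)
      (fun t ht hXB => by
        have hBt : 0 < B t := by positivity
        have hXt : X t = B t := neg_inj.1 hXB
        have := hX' t ht (hXt ▸ hBt)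
        rw [hXt] at this
        linarith)
  intro t ht
  have : 0 < B t := by positivity
  linarith [hBX t ht]

theorem eq_of_hasDerivWithinAt_mul_sub {k x₀ : ℝ}
    (hX : ∀ t ∈ Ici a, HasDerivWithinAt X (k * (x₀ - X t)) (Ici a) t) (ha : X a = x₀) :
    ∀ t ∈ Ici a, X t = x₀ := by
  intro t ht
  have hD := eq_zero_of_abs_deriv_le_mul_abs_self_of_eq_zero_right (f := fun s => X s - x₀)
    (K := |k|) (b := t)
    (fun s hs => ((hX s hs.1).continuousWithinAt.mono Icc_subset_Ici_self).sub_const x₀)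
    (fun s hs => ((hX s hs.1).mono (Ici_subset_Ici.2 hs.1)).sub_const x₀)
    (sub_eq_zero.2 ha)
    (fun s _ => by rw [norm_mul, Real.norm_eq_abs k, norm_sub_rev])
    t ⟨ht, le_rfl⟩
  exact sub_eq_zero.1 hD

end LinearComparison

/-- Positive invariance and boundedness of the single-patch SEIR model with vaccination:
with continuous nonnegative force of infection `F` and positive initial data, every class
stays in `(0, N₀]` for all `t ≥ 0`, where `N₀` is the (constant) initial total population. -/
theorem seir_positively_invariant_bounded
    (μ φ γ δ : ℝ) (hμ : 0 < μ) (hφ : 0 < φ) (hγ : 0 < γ)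
    (hδ0 : 0 < δ) (hδ1 : δ < 1)
    (S E I R F : ℝ → ℝ)
    (hFcont : ContinuousOn F (Set.Ici 0)) (hFnonneg : ∀ t ∈ Set.Ici (0 : ℝ), 0 ≤ F t)
    (N₀ : ℝ) (hN₀ : N₀ = S 0 + E 0 + I 0 + R 0)
    (hS : ∀ t ∈ Set.Ici (0 : ℝ),
      HasDerivWithinAt S (-(S t) * F t - μ * S t + (1 - δ) * μ * N₀) (Set.Ici 0) t)
    (hE : ∀ t ∈ Set.Ici (0 : ℝ),
      HasDerivWithinAt E (S t * F t - (μ + φ) * E t) (Set.Ici 0) t)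
    (hI : ∀ t ∈ Set.Ici (0 : ℝ),
      HasDerivWithinAt I (φ * E t - (μ + γ) * I t) (Set.Ici 0) t)
    (hR : ∀ t ∈ Set.Ici (0 : ℝ),
      HasDerivWithinAt R (γ * I t - μ * R t + δ * μ * N₀) (Set.Ici 0) t)
    (hS0 : 0 < S 0) (hE0 : 0 < E 0) (hI0 : 0 < I 0) (hR0 : 0 < R 0) :
    ∀ t ≥ (0 : ℝ),
      S t ∈ Set.Ioc 0 N₀ ∧ E t ∈ Set.Ioc 0 N₀ ∧ I t ∈ Set.Ioc 0 N₀ ∧ R t ∈ Set.Ioc 0 N₀ := by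
  intro T hT
  have hN₀pos : 0 < N₀ := by linarith
  obtain ⟨M, hM⟩ :=
    isCompact_Icc.bddAbove_image (hFcont.mono (Icc_subset_Ici_self : Icc 0 T ⊆ Ici 0))
  have hSpos := pos_of_neg_mul_le_deriv (b := T) (c := M + μ) hS hS0 fun t ht hSt => by
    have := mul_le_mul_of_nonneg_left (hM ⟨t, Ico_subset_Icc_self ht, rfl⟩) hSt.le
    have : 0 ≤ (1 - δ) * μ * N₀ := by have := sub_pos.2 hδ1; positivity
    linarith
  have hEpos := pos_of_neg_mul_le_deriv (c := μ + φ) hE hE0 fun t ht _ => by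
    have := mul_nonneg (hSpos t (Ico_subset_Icc_self ht)).le (hFnonneg t ht.1)
    linarith
  have hIpos := pos_of_neg_mul_le_deriv (c := μ + γ) hI hI0 fun t ht _ => by
    have := mul_nonneg hφ.le (hEpos t (Ico_subset_Icc_self ht)).le
    linarith
  have hRpos := pos_of_neg_mul_le_deriv (c := μ) hR hR0 fun t ht _ => by
    have := mul_nonneg hγ.le (hIpos t (Ico_subset_Icc_self ht)).le
    have : 0 ≤ δ * μ * N₀ := by positivity
    linarith
  have hN : S T + E T + I T + R T = N₀ := eq_of_hasDerivWithinAt_mul_sub (X := S + E + I + R)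
    (fun t ht => ((((hS t ht).add (hE t ht)).add (hI t ht)).add (hR t ht)).congr_deriv (by
      simp only [Pi.add_apply]; ring)) hN₀.symm T hT
  have hT' : T ∈ Icc 0 T := right_mem_Icc.2 hT
  have hST := hSpos T hT'; have hET := hEpos T hT'; have hIT := hIpos T hT'
  have hRT := hRpos T hT'
  exact ⟨⟨hST, by linarith⟩, ⟨hET, by linarith⟩, ⟨hIT, by linarith⟩, ⟨hRT, by linarith⟩⟩
end

section
/- Let μ, γ, φ, β > 0, α ∈ [0,1], δ₁, δ₂ ∈ [0,1). Let F be the 4×4 real matrix with rows (0, β(1-δ₁), 0, βα(1-δ₁)), (0,0,0,0), (0, βα(1-δ₂), 0, β(1-δ₂)), (0,0,0,0), and let V be the 4×4 matrix with rows (μ+φ, 0, 0, 0), (-φ, μ+γ, 0, 0), (0, 0, μ+φ, 0), (0, 0, -φ, μ+γ). Then V is invertible and the spectral radius of F·V⁻¹ equals βφ((1-δ₁)+(1-δ₂)+√(4α²(1-δ₁)(1-δ₂)+(δ₁-δ₂)²))/(2(μ+φ)(μ+γ)). -/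
open Matrix

/-!
`V` consists of two lower-triangular `2 × 2` blocks, so `V⁻¹` is explicit, and `F · V⁻¹` keeps
the two zero rows of `F`. Expanding along those rows, its characteristic polynomial is
`λ² · (λ² - (a + g) λ + (a g - c e))`, where `a, c, e, g` are its entries in rows and columns
1 and 3. Since `0 ≤ c e ≤ a g` (this is where `α ≤ 1` enters), the quadratic has the real roots
`(a + g ± s) / 2` with `s = √((a - g)² + 4 c e) ≤ a + g`, both nonnegative, and the spectral
radius is the larger one.
-/

lemma det_algebraMap_sub_of_zero_rows {R : Type*} [CommRing R] (a b c d e f g h k : R) :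
    (algebraMap R (Matrix (Fin 4) (Fin 4) R) k -
      !![a, b, c, d; 0, 0, 0, 0; e, f, g, h; 0, 0, 0, 0]).det =
      k ^ 2 * ((k - a) * (k - g) - c * e) := by
  simp [det_succ_row_zero, Fin.sum_univ_succ, algebraMap_matrix_apply, Fin.succAbove]
  ring

lemma spectrum_of_zero_rows {K : Type*} [Field K] (a b c d e f g h r t : K)
    (hsum : a + g = r + t) (hprod : a * g - c * e = r * t) :
    spectrum K !![a, b, c, d; 0, 0, 0, 0; e, f, g, h; 0, 0, 0, 0] = {0, r, t} := by
  ext k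
  have hfactor : (k - a) * (k - g) - c * e = (k - r) * (k - t) := by
    linear_combination (-k) * hsum + hprod
  rw [spectrum.mem_iff, isUnit_iff_isUnit_det, isUnit_iff_ne_zero, not_ne_iff,
    det_algebraMap_sub_of_zero_rows, hfactor]
  simp [sub_eq_zero]

lemma spectralRadius_eq_of_spectrum_eq {A : Type*} [Ring A] [Algebra ℂ A] {x : A} {r t : ℝ}
    (hr : 0 ≤ r) (hrt : r ≤ t) (h : spectrum ℂ x = {0, (r : ℂ), (t : ℂ)}) :
    spectralRadius ℂ x = ENNReal.ofReal t := by
  simp only [spectralRadius, h, iSup_insert, iSup_singleton, ← enorm_eq_nnnorm,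
    ← ofReal_norm, norm_zero, ENNReal.ofReal_zero,
    Complex.norm_real, Real.norm_of_nonneg hr, Real.norm_of_nonneg (hr.trans hrt)]
  rw [max_eq_right (ENNReal.ofReal_le_ofReal hrt), max_eq_right zero_le]

lemma spectralRadius_of_zero_rows (a b c d e f g h s : ℝ) (hag : 0 ≤ a + g)
    (hce : c * e ≤ a * g) (hs₀ : 0 ≤ s) (hs : s ^ 2 = (a - g) ^ 2 + 4 * c * e) :
    spectralRadius ℂ ((!![a, b, c, d; 0, 0, 0, 0; e, f, g, h; 0, 0, 0, 0]).map
        (Complex.ofReal : ℝ → ℂ)) = ENNReal.ofReal ((a + g + s) / 2) := by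
  have hs_le : s ≤ a + g := by nlinarith
  have hmap : (!![a, b, c, d; 0, 0, 0, 0; e, f, g, h; 0, 0, 0, 0]).map Complex.ofReal =
      !![(a : ℂ), b, c, d; 0, 0, 0, 0; e, f, g, h; 0, 0, 0, 0] := by
    ext i j; fin_cases i <;> fin_cases j <;> rfl
  have hsC : (s : ℂ) ^ 2 = (a - g) ^ 2 + 4 * c * e := by exact_mod_cast hs
  apply spectralRadius_eq_of_spectrum_eq (r := (a + g - s) / 2) (by linarith) (by linarith)
  rw [hmap, spectrum_of_zero_rows]
  · push_cast; ring
  · push_cast; linear_combination (1 / 4 : ℂ) * hsC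

lemma blockLowerTriangular_mul_inv_eq_one {K : Type*} [Field K] {p r : K} (q : K) (hp : p ≠ 0)
    (hr : r ≠ 0) :
    !![p, 0, 0, 0; -q, r, 0, 0; 0, 0, p, 0; 0, 0, -q, r] *
      !![p⁻¹, 0, 0, 0; q / (p * r), r⁻¹, 0, 0; 0, 0, p⁻¹, 0; 0, 0, q / (p * r), r⁻¹] = 1 := by
  ext i j
  fin_cases i <;> fin_cases j <;> simp [mul_apply, Fin.sum_univ_four, one_apply] <;>
    field_simp <;> ring

lemma zero_rows_mul_blockLowerTriangularInv {K : Type*} [Field K] (u v w z p q r : K) :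
    !![0, u, 0, v; 0, 0, 0, 0; 0, w, 0, z; 0, 0, 0, 0] *
      !![p⁻¹, 0, 0, 0; q / (p * r), r⁻¹, 0, 0; 0, 0, p⁻¹, 0; 0, 0, q / (p * r), r⁻¹] =
      !![u * q / (p * r), u / r, v * q / (p * r), v / r; 0, 0, 0, 0;
        w * q / (p * r), w / r, z * q / (p * r), z / r; 0, 0, 0, 0] := by
  ext i j
  fin_cases i <;> fin_cases j <;> simp [mul_apply, Fin.sum_univ_four] <;> ring

/-- Next-generation method for the rescaled two-patch SEIR system: the transition matrix
`V` is invertible, and the spectral radius of the next-generation matrix `F·V⁻¹` equals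
`βφ((1-δ₁)+(1-δ₂)+√(4α²(1-δ₁)(1-δ₂)+(δ₁-δ₂)²))/(2(μ+φ)(μ+γ))`, the control
reproduction number `R_C`. -/
theorem next_generation_spectral_radius
    (μ γ φ β α δ₁ δ₂ : ℝ)
    (hμ : 0 < μ) (hγ : 0 < γ) (hφ : 0 < φ) (hβ : 0 < β)
    (hα : α ∈ Set.Icc (0 : ℝ) 1)
    (hδ₁ : δ₁ ∈ Set.Ico (0 : ℝ) 1) (hδ₂ : δ₂ ∈ Set.Ico (0 : ℝ) 1)
    (F V : Matrix (Fin 4) (Fin 4) ℝ)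
    (hF : F = !![0, β * (1 - δ₁), 0, β * α * (1 - δ₁);
                 0, 0, 0, 0;
                 0, β * α * (1 - δ₂), 0, β * (1 - δ₂);
                 0, 0, 0, 0])
    (hV : V = !![μ + φ, 0, 0, 0;
                 -φ, μ + γ, 0, 0;
                 0, 0, μ + φ, 0;
                 0, 0, -φ, μ + γ]) :
    IsUnit V ∧
      spectralRadius ℂ ((F * V⁻¹).map (Complex.ofReal : ℝ → ℂ)) =
        ENNReal.ofReal
          (β * φ * ((1 - δ₁) + (1 - δ₂) +
              Real.sqrt (4 * α ^ 2 * (1 - δ₁) * (1 - δ₂) + (δ₁ - δ₂) ^ 2)) /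
            (2 * (μ + φ) * (μ + γ))) := by
  have hVW : V * _ = 1 := hV ▸ blockLowerTriangular_mul_inv_eq_one φ (by positivity : μ + φ ≠ 0)
    (by positivity : μ + γ ≠ 0)
  refine ⟨IsUnit.of_mul_eq_one _ hVW, ?_⟩
  have h₁ : 0 < 1 - δ₁ := sub_pos.mpr hδ₁.2
  have h₂ : 0 < 1 - δ₂ := sub_pos.mpr hδ₂.2
  set Δ := 4 * α ^ 2 * (1 - δ₁) * (1 - δ₂) + (δ₁ - δ₂) ^ 2
  have hΔ : 0 ≤ Δ := by positivity
  rw [hF, inv_eq_right_inv hVW, zero_rows_mul_blockLowerTriangularInv,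
    spectralRadius_of_zero_rows (s := β * φ / ((μ + φ) * (μ + γ)) * √Δ)]
  · congr 1; field_simp
  · positivity
  · have hα_sq : α ^ 2 ≤ 1 := pow_le_one₀ hα.1 hα.2
    calc _ = α ^ 2 * (β * (1 - δ₁) * φ / ((μ + φ) * (μ + γ)) *
          (β * (1 - δ₂) * φ / ((μ + φ) * (μ + γ)))) := by ring
      _ ≤ _ := mul_le_of_le_one_left (by positivity) hα_sq
  · positivity
  · rw [mul_pow, Real.sq_sqrt hΔ]; ring
end

section
/- Write A = μ+γ, B = μ+φ, D₁ = 1-δ₁, D₂ = 1-δ₂, where μ, γ, φ, β > 0, α ∈ [0,1], δ₁, δ₂ ∈ [0,1), and let R_C = βφ(D₁ + D₂ + √((D₁-D₂)² + 4α²D₁D₂))/(2AB). If D_j·β·φ > A·B for some j ∈ {1,2}, then R_C > 1. -/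
/-! Dropping the nonnegative coupling term `4α²D₁D₂` under the root bounds the bracket
`D₁ + D₂ + √((D₁-D₂)² + 4α²D₁D₂)` below by `D₁ + D₂ + |D₁ - D₂| = 2 max D₁ D₂`. Hence
`R_C ≥ βφ · max D₁ D₂ / (AB)`, which exceeds `1` as soon as one patch is above threshold. -/

lemma two_mul_max_le_add_add_sqrt (x y : ℝ) {c : ℝ} (hc : 0 ≤ c) :
    2 * max x y ≤ x + y + √((x - y) ^ 2 + c) := by
  have hsqrt : |y - x| ≤ √((x - y) ^ 2 + c) :=
    Real.abs_le_sqrt (by nlinarith)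
  have hmax : 2 • max x y = x + y + |y - x| := two_nsmul_sup_eq_add_add_abs_sub x y
  rw [two_nsmul, ← two_mul] at hmax
  linarith

theorem RC_gt_one_of_patch_above_threshold_general
    (μ γ φ β α δ₁ δ₂ A B D₁ D₂ RC : ℝ)
    (hμ : 0 < μ) (hγ : 0 < γ) (hφ : 0 < φ) (hβ : 0 < β)
    (hδ₁ : δ₁ ∈ Set.Ico (0 : ℝ) 1) (hδ₂ : δ₂ ∈ Set.Ico (0 : ℝ) 1)
    (hA : A = μ + γ) (hB : B = μ + φ) (hD₁ : D₁ = 1 - δ₁) (hD₂ : D₂ = 1 - δ₂)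
    (hRC : RC = β * φ * (D₁ + D₂ + Real.sqrt ((D₁ - D₂) ^ 2 + 4 * α ^ 2 * D₁ * D₂)) /
      (2 * A * B))
    (hthresh : D₁ * β * φ > A * B ∨ D₂ * β * φ > A * B) :
    RC > 1 := by
  have hD₁pos : 0 < D₁ := by linarith [hδ₁.2]
  have hD₂pos : 0 < D₂ := by linarith [hδ₂.2]
  have hAB : 0 < 2 * A * B := by rw [hA, hB]; positivity
  have hβφ : 0 ≤ β * φ := by positivity
  have hmax : A * B < max D₁ D₂ * (β * φ) := by
    rcases hthresh with h | h <;> rw [mul_assoc] at h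
    · exact h.trans_le (mul_le_mul_of_nonneg_right (le_max_left _ _) hβφ)
    · exact h.trans_le (mul_le_mul_of_nonneg_right (le_max_right _ _) hβφ)
  have hroot := two_mul_max_le_add_add_sqrt D₁ D₂ (c := 4 * α ^ 2 * D₁ * D₂) (by positivity)
  rw [hRC, gt_iff_lt, one_lt_div hAB]
  calc 2 * A * B < β * φ * (2 * max D₁ D₂) := by linarith
    _ ≤ β * φ * _ := mul_le_mul_of_nonneg_left hroot hβφ

/-- If `Dⱼ·βφ > AB` for some patch `j ∈ {1,2}`, then the control reproduction number
`R_C = βφ(D₁ + D₂ + √((D₁-D₂)² + 4α²D₁D₂))/(2AB)` satisfies `R_C > 1`. -/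
theorem RC_gt_one_of_patch_above_threshold
    (μ γ φ β α δ₁ δ₂ A B D₁ D₂ RC : ℝ)
    (hμ : 0 < μ) (hγ : 0 < γ) (hφ : 0 < φ) (hβ : 0 < β)
    (hα : α ∈ Set.Icc (0 : ℝ) 1)
    (hδ₁ : δ₁ ∈ Set.Ico (0 : ℝ) 1) (hδ₂ : δ₂ ∈ Set.Ico (0 : ℝ) 1)
    (hA : A = μ + γ) (hB : B = μ + φ) (hD₁ : D₁ = 1 - δ₁) (hD₂ : D₂ = 1 - δ₂)
    (hRC : RC = β * φ * (D₁ + D₂ + Real.sqrt ((D₁ - D₂) ^ 2 + 4 * α ^ 2 * D₁ * D₂)) /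
      (2 * A * B))
    (hthresh : D₁ * β * φ > A * B ∨ D₂ * β * φ > A * B) :
    RC > 1 :=
  RC_gt_one_of_patch_above_threshold_general μ γ φ β α δ₁ δ₂ A B D₁ D₂ RC hμ hγ hφ hβ hδ₁ hδ₂ hA hB
    hD₁ hD₂ hRC hthresh
end

section
/- Write A = μ+γ, B = μ+φ, D₁ = 1-δ₁, D₂ = 1-δ₂, where μ, γ, φ, β > 0, α ∈ [0,1], δ₁, δ₂ ∈ [0,1]. Then βφ(D₁ + D₂ + √((D₁-D₂)² + 4α²D₁D₂))/(2AB) ≥ βφ(D₁+D₂)(1+α)/(2AB); that is, the control reproduction number R_C with heterogeneous unvaccinated proportions (D₁, D₂) is greater than or equal to the control reproduction number with both patches at the homogeneous average coverage D* = (D₁+D₂)/2. -/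
theorem mul_add_le_sqrt_sub_sq_add_mul {α x y : ℝ} (hα : |α| ≤ 1) :
    α * (x + y) ≤ √((x - y) ^ 2 + 4 * α ^ 2 * x * y) := by
  have hα2 : α ^ 2 ≤ 1 := (sq_le_one_iff_abs_le_one α).mpr hα
  have hradicand : (x - y) ^ 2 + 4 * α ^ 2 * x * y =
      (α * (x + y)) ^ 2 + (1 - α ^ 2) * (x - y) ^ 2 := by ring
  calc α * (x + y) ≤ |α * (x + y)| := le_abs_self _
    _ = √((α * (x + y)) ^ 2) := (Real.sqrt_sq_eq_abs _).symm
    _ ≤ √((x - y) ^ 2 + 4 * α ^ 2 * x * y) := by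
      rw [hradicand]
      exact Real.sqrt_le_sqrt (le_add_of_nonneg_right
        (mul_nonneg (sub_nonneg.mpr hα2) (sq_nonneg _)))

theorem RC_heterogeneous_ge_homogeneous_general
    (μ γ φ β α A B D₁ D₂ : ℝ)
    (hμ : 0 < μ) (hγ : 0 < γ) (hφ : 0 < φ) (hβ : 0 < β)
    (hα : α ∈ Set.Icc (0 : ℝ) 1)
    (hA : A = μ + γ) (hB : B = μ + φ) :
    β * φ * (D₁ + D₂ + Real.sqrt ((D₁ - D₂) ^ 2 + 4 * α ^ 2 * D₁ * D₂)) /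
      (2 * A * B) ≥ β * φ * (D₁ + D₂) * (1 + α) / (2 * A * B) := by
  have hden : 0 ≤ 2 * A * B := by subst hA hB; positivity
  have hαabs : |α| ≤ 1 := abs_le.mpr ⟨by linarith [hα.1], hα.2⟩
  refine div_le_div_of_nonneg_right ?_ hden
  calc β * φ * (D₁ + D₂) * (1 + α) = β * φ * (D₁ + D₂ + α * (D₁ + D₂)) := by ring
    _ ≤ β * φ * (D₁ + D₂ + √((D₁ - D₂) ^ 2 + 4 * α ^ 2 * D₁ * D₂)) := by
      gcongr
      exact mul_add_le_sqrt_sub_sq_add_mul hαabs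

/-- Heterogeneous vaccination coverage increases the control reproduction number:
`R_C(D₁, D₂) ≥ R_C(D*, D*)` where `D* = (D₁+D₂)/2`, i.e.
`βφ(D₁ + D₂ + √((D₁-D₂)² + 4α²D₁D₂))/(2AB) ≥ βφ(D₁+D₂)(1+α)/(2AB)`. -/
theorem RC_heterogeneous_ge_homogeneous
    (μ γ φ β α δ₁ δ₂ A B D₁ D₂ : ℝ)
    (hμ : 0 < μ) (hγ : 0 < γ) (hφ : 0 < φ) (hβ : 0 < β)
    (hα : α ∈ Set.Icc (0 : ℝ) 1)
    (hδ₁ : δ₁ ∈ Set.Icc (0 : ℝ) 1) (hδ₂ : δ₂ ∈ Set.Icc (0 : ℝ) 1)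
    (hA : A = μ + γ) (hB : B = μ + φ) (hD₁ : D₁ = 1 - δ₁) (hD₂ : D₂ = 1 - δ₂) :
    β * φ * (D₁ + D₂ + Real.sqrt ((D₁ - D₂) ^ 2 + 4 * α ^ 2 * D₁ * D₂)) /
      (2 * A * B) ≥ β * φ * (D₁ + D₂) * (1 + α) / (2 * A * B) :=
  RC_heterogeneous_ge_homogeneous_general μ γ φ β α A B D₁ D₂ hμ hγ hφ hβ hα hA hB
end

section
/- Let β, μ, φ, γ > 0, α > 0, δ₁, δ₂ ∈ [0,1), and write A = μ+γ, B = μ+φ, D₂ = 1-δ₂. Suppose (s₁, e₁, i₁, s₂, e₂, i₂) is an equilibrium of the rescaled two-patch SEIR system (all six right-hand sides vanish) with Be₂ ≠ μD₂. Then e₁ = e₂(μ(βφD₂ - AB) - e₂βφB) / (αβφ(e₂B - μD₂)). -/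
/-!
Adding the `s₂` and `e₂` equations eliminates the incidence term, so `μ s₂ = μ D₂ - B e₂`, and the
`i` equations give `A (i₂ + α i₁) = φ (e₂ + α e₁)`. Substituting both into `μ A` times the `e₂`
equation leaves an equation that is linear in `e₁` with coefficient `α β φ (μ D₂ - B e₂)`, which is
nonzero by hypothesis.
-/

theorem mul_susceptible_eq_of_equilibrium {β μ φ δ s e F : ℝ}
    (hs : -β * s * F - μ * s + (1 - δ) * μ = 0) (he : β * s * F - (μ + φ) * e = 0) :
    μ * s = μ * (1 - δ) - (μ + φ) * e := by
  linear_combination -hs - he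

theorem force_of_infection_eq_of_equilibrium {α μ φ γ e₁ i₁ e₂ i₂ : ℝ}
    (h₁ : φ * e₁ - (μ + γ) * i₁ = 0) (h₂ : φ * e₂ - (μ + γ) * i₂ = 0) :
    (μ + γ) * (i₂ + α * i₁) = φ * (e₂ + α * e₁) := by
  linear_combination -h₂ - α * h₁

theorem exposed_balance_of_equilibrium {β α μ φ γ δ₂ e₁ i₁ s₂ e₂ i₂ : ℝ}
    (heq₃ : φ * e₁ - (μ + γ) * i₁ = 0)
    (heq₄ : -β * s₂ * (i₂ + α * i₁) - μ * s₂ + (1 - δ₂) * μ = 0)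
    (heq₅ : β * s₂ * (i₂ + α * i₁) - (μ + φ) * e₂ = 0)
    (heq₆ : φ * e₂ - (μ + γ) * i₂ = 0) :
    β * φ * (μ * (1 - δ₂) - (μ + φ) * e₂) * (e₂ + α * e₁) = μ * (μ + γ) * (μ + φ) * e₂ :=
  calc β * φ * (μ * (1 - δ₂) - (μ + φ) * e₂) * (e₂ + α * e₁)
      = β * (μ * s₂) * ((μ + γ) * (i₂ + α * i₁)) := by
        rw [mul_susceptible_eq_of_equilibrium heq₄ heq₅,
          force_of_infection_eq_of_equilibrium heq₃ heq₆]
        ring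
    _ = μ * (μ + γ) * (β * s₂ * (i₂ + α * i₁)) := by ring
    _ = μ * (μ + γ) * (μ + φ) * e₂ := by rw [sub_eq_zero.mp heq₅]; ring

theorem equilibrium_e1_formula_general
    (β α μ φ γ δ₂ A B D₂ : ℝ)
    (hβ : 0 < β) (hα : 0 < α) (hφ : 0 < φ)
    (hA : A = μ + γ) (hB : B = μ + φ) (hD₂ : D₂ = 1 - δ₂)
    (e₁ i₁ s₂ e₂ i₂ : ℝ)
    (heq₃ : φ * e₁ - (μ + γ) * i₁ = 0)
    (heq₄ : -β * s₂ * (i₂ + α * i₁) - μ * s₂ + (1 - δ₂) * μ = 0)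
    (heq₅ : β * s₂ * (i₂ + α * i₁) - (μ + φ) * e₂ = 0)
    (heq₆ : φ * e₂ - (μ + γ) * i₂ = 0)
    (hne : B * e₂ ≠ μ * D₂) :
    e₁ = e₂ * (μ * (β * φ * D₂ - A * B) - e₂ * β * φ * B) /
      (α * β * φ * (e₂ * B - μ * D₂)) := by
  subst hA hB hD₂
  have hden : α * β * φ * (e₂ * (μ + φ) - μ * (1 - δ₂)) ≠ 0 :=
    mul_ne_zero (by positivity) (sub_ne_zero.mpr fun h => hne (by linarith))
  rw [eq_div_iff hden]
  linear_combination -exposed_balance_of_equilibrium heq₃ heq₄ heq₅ heq₆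

/-- At any equilibrium of the rescaled two-patch SEIR system with `Be₂ ≠ μD₂`, the exposed
class of patch 1 is given by `e₁ = e₂(μ(βφD₂ - AB) - e₂βφB)/(αβφ(e₂B - μD₂))`, where
`A = μ+γ`, `B = μ+φ`, `D₂ = 1-δ₂`. -/
theorem equilibrium_e1_formula
    (β α μ φ γ δ₁ δ₂ A B D₂ : ℝ)
    (hβ : 0 < β) (hα : 0 < α) (hμ : 0 < μ) (hφ : 0 < φ) (hγ : 0 < γ)
    (hδ₁ : δ₁ ∈ Set.Ico (0 : ℝ) 1) (hδ₂ : δ₂ ∈ Set.Ico (0 : ℝ) 1)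
    (hA : A = μ + γ) (hB : B = μ + φ) (hD₂ : D₂ = 1 - δ₂)
    (s₁ e₁ i₁ s₂ e₂ i₂ : ℝ)
    (heq₁ : -β * s₁ * (i₁ + α * i₂) - μ * s₁ + (1 - δ₁) * μ = 0)
    (heq₂ : β * s₁ * (i₁ + α * i₂) - (μ + φ) * e₁ = 0)
    (heq₃ : φ * e₁ - (μ + γ) * i₁ = 0)
    (heq₄ : -β * s₂ * (i₂ + α * i₁) - μ * s₂ + (1 - δ₂) * μ = 0)
    (heq₅ : β * s₂ * (i₂ + α * i₁) - (μ + φ) * e₂ = 0)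
    (heq₆ : φ * e₂ - (μ + γ) * i₂ = 0)
    (hne : B * e₂ ≠ μ * D₂) :
    e₁ = e₂ * (μ * (β * φ * D₂ - A * B) - e₂ * β * φ * B) /
      (α * β * φ * (e₂ * B - μ * D₂)) :=
  equilibrium_e1_formula_general β α μ φ γ δ₂ A B D₂ hβ hα hφ hA hB hD₂ e₁ i₁ s₂ e₂ i₂ heq₃ heq₄
    heq₅ heq₆ hne
end

section
/- Let β, α, μ, φ, γ > 0, δ₁, δ₂ ∈ [0,1), and let J be the Jacobian of the rescaled two-patch SEIR system at the disease-free equilibrium, namely the 6×6 real matrix with rows (-μ, 0, -β(1-δ₁), 0, 0, -βα(1-δ₁)), (0, -(μ+φ), β(1-δ₁), 0, 0, βα(1-δ₁)), (0, φ, -(μ+γ), 0, 0, 0), (0, 0, -βα(1-δ₂), -μ, 0, -β(1-δ₂)), (0, 0, βα(1-δ₂), 0, -(μ+φ), β(1-δ₂)), (0, 0, 0, 0, φ, -(μ+γ)). If R_C = βφ((1-δ₁)+(1-δ₂)+√(4α²(1-δ₁)(1-δ₂)+(δ₁-δ₂)²))/(2(μ+φ)(μ+γ)) < 1, then every eigenvalue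 z ∈ ℂ of J satisfies Re(z) < 0. -/
open Matrix

/-- Local stability of the disease-free equilibrium: if the control reproduction number
`R_C < 1`, then every (complex) eigenvalue of the Jacobian `J` of the rescaled two-patch
SEIR system at the disease-free equilibrium has negative real part. -/
theorem dfe_jacobian_stable_of_RC_lt_one
    (β α μ φ γ δ₁ δ₂ : ℝ)
    (hβ : 0 < β) (hα : 0 < α) (hμ : 0 < μ) (hφ : 0 < φ) (hγ : 0 < γ)
    (hδ₁ : δ₁ ∈ Set.Ico (0 : ℝ) 1) (hδ₂ : δ₂ ∈ Set.Ico (0 : ℝ) 1)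
    (J : Matrix (Fin 6) (Fin 6) ℝ)
    (hJ : J = !![-μ, 0, -β * (1 - δ₁), 0, 0, -β * α * (1 - δ₁);
                 0, -(μ + φ), β * (1 - δ₁), 0, 0, β * α * (1 - δ₁);
                 0, φ, -(μ + γ), 0, 0, 0;
                 0, 0, -β * α * (1 - δ₂), -μ, 0, -β * (1 - δ₂);
                 0, 0, β * α * (1 - δ₂), 0, -(μ + φ), β * (1 - δ₂);
                 0, 0, 0, 0, φ, -(μ + γ)])
    (hRC : β * φ * ((1 - δ₁) + (1 - δ₂) +
        Real.sqrt (4 * α ^ 2 * (1 - δ₁) * (1 - δ₂) + (δ₁ - δ₂) ^ 2)) /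
      (2 * (μ + φ) * (μ + γ)) < 1) :
    ∀ z ∈ spectrum ℂ (J.map (Complex.ofReal : ℝ → ℂ)), z.re < 0 := by
  obtain ⟨hδ₁0, hδ₁1⟩ := hδ₁
  obtain ⟨hδ₂0, hδ₂1⟩ := hδ₂
  have h1δ₁ : (0:ℝ) < 1 - δ₁ := by linarith
  have h1δ₂ : (0:ℝ) < 1 - δ₂ := by linarith
  intro z hz
  by_contra hre
  push_neg at hre
  -- extract an eigenvector
  rw [← AlgEquiv.spectrum_eq (Matrix.toLinAlgEquiv <| Pi.basisFun ℂ (Fin 6)),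
    ← Module.End.hasEigenvalue_iff_mem_spectrum] at hz
  obtain ⟨v, hvev⟩ := hz.exists_hasEigenvector
  have hvne : v ≠ 0 := hvev.2
  have hv : (J.map (Complex.ofReal : ℝ → ℂ)) *ᵥ v = z • v := by
    have := hvev.apply_eq_smul
    simpa [Matrix.toLinAlgEquiv_apply, Matrix.toLin'_apply, Pi.basisFun_repr,
      ← Pi.single_smul', Finset.univ_sum_single,
      (show ⇑((Pi.basisFun ℂ (Fin 6)).repr v) = v from funext fun i => by simp)] using this
  -- component equations
  have h0 := congrFun hv 0
  have h1 := congrFun hv 1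
  have h2 := congrFun hv 2
  have h3 := congrFun hv 3
  have h4 := congrFun hv 4
  have h5 := congrFun hv 5
  simp [Matrix.mulVec, dotProduct, Fin.sum_univ_six, hJ, Matrix.map_apply,
    Matrix.cons_val_succ, show (5:Fin 6) = Fin.succ 4 from rfl] at h0 h1 h2 h3 h4 h5
  -- nonvanishing denominators
  have hwre : 0 < (z + (μ:ℂ) + (γ:ℂ)).re := by
    simp only [Complex.add_re, Complex.ofReal_re]
    linarith
  have hure : 0 < (z + (μ:ℂ) + (φ:ℂ)).re := by
    simp only [Complex.add_re, Complex.ofReal_re]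
    linarith
  have hzμre : 0 < (z + (μ:ℂ)).re := by
    simp only [Complex.add_re, Complex.ofReal_re]
    linarith
  have hw : z + (μ:ℂ) + (γ:ℂ) ≠ 0 := fun h => by rw [h] at hwre; simp at hwre
  have hu : z + (μ:ℂ) + (φ:ℂ) ≠ 0 := fun h => by rw [h] at hure; simp at hure
  have hzμ : z + (μ:ℂ) ≠ 0 := fun h => by rw [h] at hzμre; simp at hzμre
  -- reduced equations
  have e2 : (z + (μ:ℂ) + (γ:ℂ)) * v 2 = (φ:ℂ) * v 1 := by linear_combination -h2
  have e5 : (z + (μ:ℂ) + (γ:ℂ)) * v 5 = (φ:ℂ) * v 4 := by linear_combination -h5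
  have E1 : ((z + (μ:ℂ) + (φ:ℂ)) * (z + (μ:ℂ) + (γ:ℂ)) - (φ:ℂ) * ((β:ℂ) * (1 - (δ₁:ℂ)))) * v 1
      = (φ:ℂ) * (α:ℂ) * ((β:ℂ) * (1 - (δ₁:ℂ))) * v 4 := by
    linear_combination (-(z + (μ:ℂ) + (γ:ℂ))) * h1 + ((β:ℂ) * (1 - (δ₁:ℂ))) * e2
      + ((α:ℂ) * ((β:ℂ) * (1 - (δ₁:ℂ)))) * e5
  have E4 : ((z + (μ:ℂ) + (φ:ℂ)) * (z + (μ:ℂ) + (γ:ℂ)) - (φ:ℂ) * ((β:ℂ) * (1 - (δ₂:ℂ)))) * v 4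
      = (φ:ℂ) * (α:ℂ) * ((β:ℂ) * (1 - (δ₂:ℂ))) * v 1 := by
    linear_combination (-(z + (μ:ℂ) + (γ:ℂ))) * h4 + ((β:ℂ) * (1 - (δ₂:ℂ))) * e5
      + ((α:ℂ) * ((β:ℂ) * (1 - (δ₂:ℂ)))) * e2
  -- the pair (v 1, v 4) is nonzero
  have hδ₁c : (1 - (δ₁:ℂ)) ≠ 0 := by
    rw [show (1 - (δ₁:ℂ)) = ((1 - δ₁ : ℝ) : ℂ) by push_cast; ring]
    exact_mod_cast ne_of_gt h1δ₁
  have hδ₂c : (1 - (δ₂:ℂ)) ≠ 0 := by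
    rw [show (1 - (δ₂:ℂ)) = ((1 - δ₂ : ℝ) : ℂ) by push_cast; ring]
    exact_mod_cast ne_of_gt h1δ₂
  have hφc : ((φ:ℂ)) ≠ 0 := Complex.ofReal_ne_zero.mpr (ne_of_gt hφ)
  have hαc : ((α:ℂ)) ≠ 0 := Complex.ofReal_ne_zero.mpr (ne_of_gt hα)
  have hβc : ((β:ℂ)) ≠ 0 := Complex.ofReal_ne_zero.mpr (ne_of_gt hβ)
  have hc1 : (φ:ℂ) * (α:ℂ) * ((β:ℂ) * (1 - (δ₁:ℂ))) ≠ 0 :=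
    mul_ne_zero (mul_ne_zero hφc hαc) (mul_ne_zero hβc hδ₁c)
  have hc2 : (φ:ℂ) * (α:ℂ) * ((β:ℂ) * (1 - (δ₂:ℂ))) ≠ 0 :=
    mul_ne_zero (mul_ne_zero hφc hαc) (mul_ne_zero hβc hδ₂c)
  have hboth : v 1 = 0 → v 4 = 0 → False := by
    intro hb1 hb4
    have hv2 : v 2 = 0 := by
      have : (z + (μ:ℂ) + (γ:ℂ)) * v 2 = 0 := by rw [e2, hb1, mul_zero]
      exact (mul_eq_zero.mp this).resolve_left hw
    have hv5 : v 5 = 0 := by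
      have : (z + (μ:ℂ) + (γ:ℂ)) * v 5 = 0 := by rw [e5, hb4, mul_zero]
      exact (mul_eq_zero.mp this).resolve_left hw
    have hv0 : v 0 = 0 := by
      have : (z + (μ:ℂ)) * v 0 = 0 := by
        linear_combination -h0 - ((β:ℂ) * (1 - (δ₁:ℂ))) * hv2
          - ((β:ℂ) * (α:ℂ) * (1 - (δ₁:ℂ))) * hv5
      exact (mul_eq_zero.mp this).resolve_left hzμ
    have hv3 : v 3 = 0 := by
      have : (z + (μ:ℂ)) * v 3 = 0 := by
        linear_combination -h3 - ((β:ℂ) * (α:ℂ) * (1 - (δ₂:ℂ))) * hv2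
          - ((β:ℂ) * (1 - (δ₂:ℂ))) * hv5
      exact (mul_eq_zero.mp this).resolve_left hzμ
    apply hvne
    funext i
    fin_cases i <;> assumption
  have hv1 : v 1 ≠ 0 := by
    intro hb1
    apply hboth hb1
    have : (φ:ℂ) * (α:ℂ) * ((β:ℂ) * (1 - (δ₁:ℂ))) * v 4 = 0 := by
      rw [← E1, hb1, mul_zero]
    exact (mul_eq_zero.mp this).resolve_left hc1
  have hv4 : v 4 ≠ 0 := by
    intro hb4
    apply hboth _ hb4
    have : (φ:ℂ) * (α:ℂ) * ((β:ℂ) * (1 - (δ₂:ℂ))) * v 1 = 0 := by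
      rw [← E4, hb4, mul_zero]
    exact (mul_eq_zero.mp this).resolve_left hc2
  -- the quadratic satisfied by p = (z+μ+φ)(z+μ+γ)
  have hq : ((z + (μ:ℂ) + (φ:ℂ)) * (z + (μ:ℂ) + (γ:ℂ)) - (φ:ℂ) * ((β:ℂ) * (1 - (δ₁:ℂ))))
      * ((z + (μ:ℂ) + (φ:ℂ)) * (z + (μ:ℂ) + (γ:ℂ)) - (φ:ℂ) * ((β:ℂ) * (1 - (δ₂:ℂ))))
      = (φ:ℂ)^2 * (α:ℂ)^2 * ((β:ℂ) * (1 - (δ₁:ℂ))) * ((β:ℂ) * (1 - (δ₂:ℂ))) := by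
    have key := congrArg₂ (· * ·) E1 E4
    have hne : v 1 * v 4 ≠ 0 := mul_ne_zero hv1 hv4
    apply mul_right_cancel₀ hne
    linear_combination key
  -- abbreviations (real)
  set T : ℝ := 4 * α ^ 2 * (1 - δ₁) * (1 - δ₂) + (δ₁ - δ₂) ^ 2 with hT
  have hT0 : 0 ≤ T := by positivity
  set Sr : ℝ := φ * (β * (1 - δ₁) + β * (1 - δ₂)) with hSr
  have hSr0 : 0 ≤ Sr := by positivity
  set Dr : ℝ := Sr^2 - 4 * (φ^2 * (β * (1 - δ₁)) * (β * (1 - δ₂)) * (1 - α^2)) with hDr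
  have hDrT : Dr = (φ * β)^2 * T := by rw [hDr, hSr, hT]; ring
  have hDr0 : 0 ≤ Dr := by rw [hDrT]; positivity
  -- (2p - Sr)^2 = Dr
  have hsq : (2 * ((z + (μ:ℂ) + (φ:ℂ)) * (z + (μ:ℂ) + (γ:ℂ))) - (Sr:ℂ))^2 = ((Dr:ℝ):ℂ) := by
    rw [hDr, hSr]
    push_cast
    linear_combination 4 * hq
  have habs2 : (norm (2 * ((z + (μ:ℂ) + (φ:ℂ)) * (z + (μ:ℂ) + (γ:ℂ))) - (Sr:ℂ)))^2
      = Dr := by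
    have := congrArg norm hsq
    rwa [norm_pow, Complex.norm_real, Real.norm_eq_abs, abs_of_nonneg hDr0] at this
  have habs : norm (2 * ((z + (μ:ℂ) + (φ:ℂ)) * (z + (μ:ℂ) + (γ:ℂ))) - (Sr:ℂ))
      = φ * β * Real.sqrt T := by
    have h1 : norm (2 * ((z + (μ:ℂ) + (φ:ℂ)) * (z + (μ:ℂ) + (γ:ℂ))) - (Sr:ℂ))
        = Real.sqrt Dr := by
      rw [← habs2, Real.sqrt_sq (norm_nonneg _)]
    rw [h1, hDrT, Real.sqrt_mul (by positivity), Real.sqrt_sq (by positivity)]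
  -- lower bound on |p|
  have hu_lb : (μ + φ : ℝ) ≤ norm (z + (μ:ℂ) + (φ:ℂ)) := by
    refine le_trans ?_ (Complex.re_le_norm _)
    simp only [Complex.add_re, Complex.ofReal_re]
    linarith
  have hw_lb : (μ + γ : ℝ) ≤ norm (z + (μ:ℂ) + (γ:ℂ)) := by
    refine le_trans ?_ (Complex.re_le_norm _)
    simp only [Complex.add_re, Complex.ofReal_re]
    linarith
  have hp_lb : (μ + φ) * (μ + γ) ≤ norm ((z + (μ:ℂ) + (φ:ℂ)) * (z + (μ:ℂ) + (γ:ℂ))) := by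
    rw [norm_mul]
    exact mul_le_mul hu_lb hw_lb (by positivity) (norm_nonneg _)
  -- triangle inequality
  have htri : 2 * norm ((z + (μ:ℂ) + (φ:ℂ)) * (z + (μ:ℂ) + (γ:ℂ)))
      ≤ norm (2 * ((z + (μ:ℂ) + (φ:ℂ)) * (z + (μ:ℂ) + (γ:ℂ))) - (Sr:ℂ)) + Sr := by
    have h1 : norm (2 * ((z + (μ:ℂ) + (φ:ℂ)) * (z + (μ:ℂ) + (γ:ℂ))))
        ≤ norm (2 * ((z + (μ:ℂ) + (φ:ℂ)) * (z + (μ:ℂ) + (γ:ℂ))) - (Sr:ℂ))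
          + norm ((Sr:ℂ)) := by
      calc norm (2 * ((z + (μ:ℂ) + (φ:ℂ)) * (z + (μ:ℂ) + (γ:ℂ))))
          = norm ((2 * ((z + (μ:ℂ) + (φ:ℂ)) * (z + (μ:ℂ) + (γ:ℂ))) - (Sr:ℂ)) + (Sr:ℂ)) := by
            ring_nf
        _ ≤ _ := norm_add_le _ _
    have h2 : norm (2 * ((z + (μ:ℂ) + (φ:ℂ)) * (z + (μ:ℂ) + (γ:ℂ))))
        = 2 * norm ((z + (μ:ℂ) + (φ:ℂ)) * (z + (μ:ℂ) + (γ:ℂ))) := by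
      rw [norm_mul, Complex.norm_two]
    rw [h2, Complex.norm_real, Real.norm_eq_abs, abs_of_nonneg hSr0] at h1
    exact h1
  -- the R_C condition
  have hden : (0:ℝ) < 2 * (μ + φ) * (μ + γ) := by positivity
  rw [div_lt_one hden] at hRC
  have hfin : φ * β * Real.sqrt T + Sr < 2 * ((μ + φ) * (μ + γ)) := by
    have : φ * β * Real.sqrt T + Sr
        = β * φ * ((1 - δ₁) + (1 - δ₂) + Real.sqrt T) := by rw [hSr]; ring
    rw [this]
    linarith
  rw [habs] at htri
  linarith
end
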